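/- Moment bound on score functions of normally-perturbed variables: if S is a real random variable and X = S + Z with Z ~ N(0,τ) independent of S, then for every integer k ≥ 1, (E|ρ_X(X)|^k)^{1/k} ≤ √(2^{1/k}·2k/(τe)), where ρ_X is the score function of X. -/

import Mathlib

/-!
With `w_x(s) = gauss τ (x - s)`, the score `p'X x / pX x` is the `w_x dμ`-average of
`-(x - s) / τ`, so Jensen's inequality bounds `|p'X x / pX x| ^ k * pX x` by
`∫ |(x - s) / τ| ^ k * w_x(s) dμ(s)`. Integrating in `x` and swapping the integrals leaves the
Gaussian moment `∫ |t / τ| ^ k * gauss τ t dt`. The elementary bound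
`|u| ^ k ≤ (2k / (τe)) ^ (k / 2) * exp (τ u² / 4)` turns `gauss τ t` into `√2 * gauss (2τ) t`,
whose integral is `√2`.
-/

open MeasureTheory Real

/-- The centered Gaussian density with variance `t`. -/
noncomputable def gauss (t x : ℝ) : ℝ :=
  (Real.sqrt (2 * Real.pi * t))⁻¹ * Real.exp (-(x ^ 2) / (2 * t))

open scoped NNReal

theorem ConvexOn.map_integral_mul_div_integral_le {α : Type*} [MeasurableSpace α]
    {μ : Measure α} {φ : ℝ → ℝ} (hφ : ConvexOn ℝ Set.univ φ) (hφc : Continuous φ)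
    {w f : α → ℝ} (hw : ∀ s, 0 ≤ w s) (hwi : Integrable w μ) (hw_pos : 0 < ∫ s, w s ∂μ)
    (hfw : Integrable (fun s => f s * w s) μ) (hφfw : Integrable (fun s => φ (f s) * w s) μ) :
    φ ((∫ s, f s * w s ∂μ) / ∫ s, w s ∂μ) * ∫ s, w s ∂μ ≤ ∫ s, φ (f s) * w s ∂μ := by
  set d : α → ℝ≥0 := fun s => (w s).toNNReal
  have hd : AEMeasurable d μ := hwi.aemeasurable.real_toNNReal
  have hdw : ∀ s, (d s : ℝ) = w s := fun s => Real.coe_toNNReal _ (hw s)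
  set ν := μ.withDensity fun s => d s
  have integral_ν (g : α → ℝ) : ∫ s, g s ∂ν = ∫ s, g s * w s ∂μ := by
    simp only [ν, integral_withDensity_eq_integral_smul₀ hd, NNReal.smul_def, hdw, smul_eq_mul,
      mul_comm]
  have integrable_ν {g : α → ℝ} (hg : Integrable (fun s => g s * w s) μ) : Integrable g ν := by
    rw [integrable_withDensity_iff_integrable_smul₀ hd]
    simpa only [NNReal.smul_def, hdw, smul_eq_mul, mul_comm] using hg
  have hν_univ : ν.real Set.univ = ∫ s, w s ∂μ := by simpa using integral_ν 1
  have : IsFiniteMeasure ν := isFiniteMeasure_withDensity_ofReal hwi.2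
  have : NeZero ν := ⟨fun h => by simp [← hν_univ, h] at hw_pos⟩
  have jensen := hφ.map_average_le hφc.continuousOn isClosed_univ
    (ae_of_all _ fun s => Set.mem_univ (f s)) (integrable_ν hfw) (integrable_ν hφfw)
  rw [average_eq, average_eq, hν_univ, integral_ν, integral_ν, smul_eq_mul, smul_eq_mul,
    inv_mul_eq_div, inv_mul_eq_div] at jensen
  exact (le_div_iff₀ hw_pos).1 jensen

section Translation

variable {G : Type*} [AddGroup G] [MeasurableSpace G] [MeasurableAdd₂ G] [MeasurableNeg G]
  {ν : Measure G} [SFinite ν] [ν.IsAddRightInvariant] {μ : Measure G} {F : G → ℝ}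

theorem integrable_comp_fst_sub_snd [IsFiniteMeasure μ] (hF : Integrable F ν) :
    Integrable (fun p : G × G => F (p.1 - p.2)) (ν.prod μ) := by
  simpa using (integrable_const (1 : ℝ)).convolution_integrand (ContinuousLinearMap.mul ℝ ℝ) hF

theorem integrable_integral_comp_sub [IsFiniteMeasure μ] (hF : Integrable F ν) :
    Integrable (fun x => ∫ s, F (x - s) ∂μ) ν :=
  (integrable_comp_fst_sub_snd hF).integral_prod_left

theorem integral_integral_comp_sub [IsProbabilityMeasure μ] (hF : Integrable F ν) :
    ∫ x, ∫ s, F (x - s) ∂μ ∂ν = ∫ x, F x ∂ν := by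
  rw [integral_integral_swap (integrable_comp_fst_sub_snd hF)]
  simp [integral_sub_right_eq_self]

end Translation

theorem abs_rpow_le_mul_exp_sq {a p : ℝ} (ha : 0 < a) (hp : 0 < p) (s : ℝ) :
    |s| ^ p ≤ (p / (2 * a * exp 1)) ^ (p / 2) * exp (a * s ^ 2) := by
  set v := 2 * a * s ^ 2 / p with hv_def
  have hsq : s ^ 2 ≤ p / (2 * a * exp 1) * exp v := by
    have hv : v ≤ exp v / exp 1 := by simpa [exp_sub] using add_one_le_exp (v - 1)
    calc s ^ 2 = p / (2 * a) * v := by rw [hv_def]; field_simp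
      _ ≤ p / (2 * a) * (exp v / exp 1) := by gcongr
      _ = p / (2 * a * exp 1) * exp v := by ring
  calc |s| ^ p = (s ^ 2) ^ (p / 2) := by
        rw [← sq_abs, ← rpow_natCast, ← rpow_mul (abs_nonneg s)]; push_cast; ring_nf
    _ ≤ (p / (2 * a * exp 1) * exp v) ^ (p / 2) := by gcongr
    _ = (p / (2 * a * exp 1)) ^ (p / 2) * exp (a * s ^ 2) := by
        rw [mul_rpow (by positivity) (exp_pos v).le, ← exp_mul, hv_def]
        congr 2
        field_simp

theorem sqrt_mul_rpow_div_two_rpow_one_div {a b : ℝ} (ha : 0 ≤ a) (hb : 0 ≤ b) {k : ℝ}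
    (hk : k ≠ 0) : (√a * b ^ (k / 2)) ^ (1 / k) = √(a ^ (1 / k) * b) := by
  rw [mul_rpow (sqrt_nonneg a) (rpow_nonneg hb _), sqrt_eq_rpow, sqrt_eq_rpow,
    mul_rpow (rpow_nonneg ha _) hb, ← rpow_mul ha, ← rpow_mul ha, ← rpow_mul hb]
  congr 2 <;> field_simp

section Gauss

variable {τ : ℝ}

theorem gauss_nonneg (τ x : ℝ) : 0 ≤ gauss τ x := by
  unfold gauss; positivity

theorem gauss_pos (hτ : 0 < τ) (x : ℝ) : 0 < gauss τ x := by
  unfold gauss; positivity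

theorem gauss_le (hτ : 0 ≤ τ) (x : ℝ) : gauss τ x ≤ (√(2 * π * τ))⁻¹ := by
  unfold gauss
  refine mul_le_of_le_one_right (by positivity) (exp_le_one_iff.2 ?_)
  rw [neg_div]
  exact neg_nonpos.2 (by positivity)

@[fun_prop]
theorem continuous_gauss (τ : ℝ) : Continuous (gauss τ) := by
  unfold gauss; fun_prop

theorem gauss_eq_gaussianPDFReal (hτ : 0 ≤ τ) :
    gauss τ = ProbabilityTheory.gaussianPDFReal 0 ⟨τ, hτ⟩ := by
  ext x; simp [gauss, ProbabilityTheory.gaussianPDFReal]; rfl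

theorem integrable_gauss (hτ : 0 ≤ τ) : Integrable (gauss τ) := by
  rw [gauss_eq_gaussianPDFReal hτ]; fun_prop

theorem integral_gauss (hτ : 0 < τ) : ∫ x, gauss τ x = 1 := by
  rw [gauss_eq_gaussianPDFReal hτ.le]
  exact ProbabilityTheory.integral_gaussianPDFReal_eq_one 0
    (ne_of_gt (show (0 : ℝ≥0) < ⟨τ, hτ.le⟩ from hτ))

theorem gauss_mul_exp (τ t : ℝ) :
    gauss τ t * exp (t ^ 2 / (4 * τ)) = √2 * gauss (2 * τ) t := by
  have hsqrt : √(2 * π * (2 * τ)) = √2 * √(2 * π * τ) := by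
    rw [← sqrt_mul zero_le_two]; ring_nf
  rw [gauss, gauss, hsqrt, mul_inv, ← mul_assoc, ← mul_assoc,
    mul_inv_cancel₀ (by positivity), one_mul, mul_assoc, ← exp_add]
  congr 2; ring

end Gauss

section Moments

variable {τ : ℝ} {k : ℕ}

theorem abs_div_pow_mul_gauss_le (hτ : 0 < τ) (hk : k ≠ 0) (t : ℝ) :
    |t / τ| ^ k * gauss τ t ≤ (2 * k / (τ * exp 1)) ^ ((k : ℝ) / 2) * (√2 * gauss (2 * τ) t) := by
  have hk' : (0 : ℝ) < k := by positivity
  have key := abs_rpow_le_mul_exp_sq (a := τ / 4) (by positivity) hk' (t / τ)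
  rw [rpow_natCast, show (k : ℝ) / (2 * (τ / 4) * exp 1) = 2 * k / (τ * exp 1) by ring,
    show τ / 4 * (t / τ) ^ 2 = t ^ 2 / (4 * τ) by field_simp] at key
  calc |t / τ| ^ k * gauss τ t
      ≤ (2 * k / (τ * exp 1)) ^ ((k : ℝ) / 2) * exp (t ^ 2 / (4 * τ)) * gauss τ t := by
        gcongr; exact gauss_nonneg τ t
    _ = (2 * k / (τ * exp 1)) ^ ((k : ℝ) / 2) * (√2 * gauss (2 * τ) t) := by
        rw [mul_assoc, mul_comm (exp _), gauss_mul_exp]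

theorem abs_div_pow_mul_gauss_le_const (hτ : 0 < τ) (hk : k ≠ 0) (t : ℝ) :
    |t / τ| ^ k * gauss τ t ≤
      (2 * k / (τ * exp 1)) ^ ((k : ℝ) / 2) * (√2 * (√(2 * π * (2 * τ)))⁻¹) := by
  refine (abs_div_pow_mul_gauss_le hτ hk t).trans ?_
  gcongr
  exact gauss_le (by positivity) t

theorem integrable_abs_div_pow_mul_gauss (hτ : 0 < τ) (hk : k ≠ 0) :
    Integrable fun t => |t / τ| ^ k * gauss τ t := by
  refine (((integrable_gauss (by positivity : 0 ≤ 2 * τ)).const_mul √2).const_mul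
    ((2 * k / (τ * exp 1)) ^ ((k : ℝ) / 2))).mono' (by fun_prop) (ae_of_all _ fun t => ?_)
  rw [norm_of_nonneg (by have := gauss_nonneg τ t; positivity)]
  exact abs_div_pow_mul_gauss_le hτ hk t

theorem integral_abs_div_pow_mul_gauss_le (hτ : 0 < τ) (hk : k ≠ 0) :
    ∫ t, |t / τ| ^ k * gauss τ t ≤ √2 * (2 * k / (τ * exp 1)) ^ ((k : ℝ) / 2) := by
  calc ∫ t, |t / τ| ^ k * gauss τ t
      ≤ ∫ t, (2 * k / (τ * exp 1)) ^ ((k : ℝ) / 2) * (√2 * gauss (2 * τ) t) :=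
        integral_mono (integrable_abs_div_pow_mul_gauss hτ hk)
          (((integrable_gauss (by positivity)).const_mul _).const_mul _)
          (abs_div_pow_mul_gauss_le hτ hk)
    _ = √2 * (2 * k / (τ * exp 1)) ^ ((k : ℝ) / 2) := by
        rw [integral_const_mul, integral_const_mul, integral_gauss (by positivity)]; ring

end Moments

theorem abs_score_pow_mul_density_le {μ : Measure ℝ} [IsProbabilityMeasure μ] {τ : ℝ}
    (hτ : 0 < τ) {k : ℕ} (hk : k ≠ 0) (x : ℝ) :
    |(∫ s, -((x - s) / τ) * gauss τ (x - s) ∂μ) / ∫ s, gauss τ (x - s) ∂μ| ^ k *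
        ∫ s, gauss τ (x - s) ∂μ ≤ ∫ s, |(x - s) / τ| ^ k * gauss τ (x - s) ∂μ := by
  have integrable_of_le {g : ℝ → ℝ} (hg : Continuous g) {C : ℝ} (hC : ∀ t, |g t| ≤ C) :
      Integrable (fun s => g (x - s)) μ :=
    Integrable.of_bound (by fun_prop) C (ae_of_all _ fun s => hC (x - s))
  have hwi : Integrable (fun s => gauss τ (x - s)) μ := integrable_of_le (continuous_gauss τ)
    fun t => (abs_of_nonneg (gauss_nonneg τ t)).trans_le (gauss_le hτ.le t)
  have hmoment {j : ℕ} (hj : j ≠ 0) :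
      Integrable (fun s => |(x - s) / τ| ^ j * gauss τ (x - s)) μ :=
    integrable_of_le (by fun_prop) fun t =>
      (abs_of_nonneg (by have := gauss_nonneg τ t; positivity)).trans_le
        (abs_div_pow_mul_gauss_le_const hτ hj t)
  have hw_pos : 0 < ∫ s, gauss τ (x - s) ∂μ := by
    rw [integral_pos_iff_support_of_nonneg (fun s => gauss_nonneg τ _) hwi]
    simp [Function.support, (gauss_pos hτ _).ne']
  have hfw : Integrable (fun s => -((x - s) / τ) * gauss τ (x - s)) μ :=
    (hmoment one_ne_zero).mono' (by fun_prop) (ae_of_all _ fun s => by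
      simp [abs_div, abs_of_nonneg (gauss_nonneg τ _)])
  have hconvex : ConvexOn ℝ Set.univ fun y : ℝ => |y| ^ k :=
    convexOn_univ_norm.pow (fun y _ => abs_nonneg y) k
  simpa only [abs_neg] using hconvex.map_integral_mul_div_integral_le (by fun_prop)
    (fun s => gauss_nonneg τ (x - s)) hwi hw_pos hfw (by simpa only [abs_neg] using hmoment hk)

/-- Moment bound on the score function of a normally-perturbed random variable:
`(E|ρ_X(X)|^k)^{1/k} ≤ √(2^{1/k}·2k/(τe))`. -/
theorem stmt5 (μ : Measure ℝ) [IsProbabilityMeasure μ] (τ : ℝ) (hτ : 0 < τ)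
    (k : ℕ) (hk : 1 ≤ k) (pX p'X : ℝ → ℝ)
    (hpX : ∀ x, pX x = ∫ s, gauss τ (x - s) ∂μ)
    (hp'X : ∀ x, p'X x = ∫ s, -((x - s) / τ) * gauss τ (x - s) ∂μ) :
    (∫ x, |p'X x / pX x| ^ k * pX x) ^ ((1 : ℝ) / k)
      ≤ Real.sqrt ((2 : ℝ) ^ ((1 : ℝ) / k) * (2 * k) / (τ * Real.exp 1)) := by
  have hk0 : k ≠ 0 := by omega
  have hpX_nonneg (x : ℝ) : 0 ≤ pX x := hpX x ▸ integral_nonneg fun s => gauss_nonneg τ _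
  have hF := integrable_abs_div_pow_mul_gauss hτ hk0
  have moment : ∫ x, |p'X x / pX x| ^ k * pX x ≤ √2 * (2 * k / (τ * exp 1)) ^ ((k : ℝ) / 2) :=
    calc ∫ x, |p'X x / pX x| ^ k * pX x
        ≤ ∫ x, ∫ s, |(x - s) / τ| ^ k * gauss τ (x - s) ∂μ :=
          integral_mono_of_nonneg (ae_of_all _ fun x => by have := hpX_nonneg x; positivity)
            (integrable_integral_comp_sub hF) (ae_of_all _ fun x => by
              simpa only [hpX, hp'X] using abs_score_pow_mul_density_le hτ hk0 x)
      _ = ∫ t, |t / τ| ^ k * gauss τ t := integral_integral_comp_sub hF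
      _ ≤ _ := integral_abs_div_pow_mul_gauss_le hτ hk0
  calc (∫ x, |p'X x / pX x| ^ k * pX x) ^ ((1 : ℝ) / k)
      ≤ (√2 * (2 * k / (τ * exp 1)) ^ ((k : ℝ) / 2)) ^ ((1 : ℝ) / k) :=
        rpow_le_rpow (integral_nonneg fun x => by have := hpX_nonneg x; positivity) moment
          (by positivity)
    _ = √((2 : ℝ) ^ ((1 : ℝ) / k) * (2 * k) / (τ * exp 1)) := by
        rw [sqrt_mul_rpow_div_two_rpow_one_div zero_le_two (by positivity) (by exact_mod_cast hk0)]
        congr 1; ring
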